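/- Let a, x, b ∈ ℝ with b ≠ 0 and (a−x)·b < 0, and let f_{τ₁}(t) = (|a−x|/t^{3/2}) φ((a + bt − x)/√t) for t > 0. Then ∫₀^∞ (2Φ(|b|√s) − 1) · f_{τ₁}(s) ds ≤ 2Φ(√(|b(a−x)|)) − 1. (This is the Jensen-inequality bound P(T₂(x) = +∞) ≤ γ(b) of the paper, where γ(b) = 2·sgn(b)·(Φ(b√(|(a−x)/b|)) − 1/2).) -/

import Mathlib

open Real MeasureTheory Set Filter

/-- Standard Gaussian density φ(z) = (1/√(2π)) e^{−z²/2}. -/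
noncomputable def gaussPdf (z : ℝ) : ℝ := (1 / Real.sqrt (2 * π)) * Real.exp (-z ^ 2 / 2)

/-- Standard Gaussian distribution function Φ(y) = ∫_{−∞}^y φ(z) dz. -/
noncomputable def gaussCdf (y : ℝ) : ℝ := ∫ z in Set.Iio y, gaussPdf z

/-- ψ_t(u) = (e^{−b²u/2}/(π√(u(t−u)))) · [ e^{−b²(t−u)/2}
      + (b/2)·√(2π(t−u)) · (2Φ(b√(t−u)) − 1) ]. -/
noncomputable def psi (b t u : ℝ) : ℝ :=
  (Real.exp (-b ^ 2 * u / 2) / (π * Real.sqrt (u * (t - u)))) *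
    (Real.exp (-b ^ 2 * (t - u) / 2) +
      (b / 2) * Real.sqrt (2 * π * (t - u)) *
        (2 * gaussCdf (b * Real.sqrt (t - u)) - 1))

/-- Inverse Gaussian first-passage density f_{τ₁}(t) = (|a−x|/t^{3/2}) φ((a+bt−x)/√t). -/
noncomputable def invGaussPdf (a x b t : ℝ) : ℝ :=
  (|a - x| / t ^ ((3 : ℝ) / 2)) * gaussPdf ((a + b * t - x) / Real.sqrt t)

/-! For β > 0 the map s ↦ 2Φ(β√s) − 1 is concave on (0, ∞), its derivative β φ(β√s)/√s being
decreasing, so it lies below its tangent line at m = c/β. Integrating that bound against the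
inverse Gaussian density with β = |b|, c = |a − x| is Jensen's inequality: the density has total
mass 1 and mean c/β, and β√(c/β) = √(βc). Both moments come from explicit antiderivatives
built from Φ(β√t − c/√t) and e^{2βc} Φ(−β√t − c/√t), whose derivatives combine through
e^{2βc} φ(β√t + c/√t) = φ(β√t − c/√t). -/

open Topology ProbabilityTheory

lemma integrableOn_Ioi_deriv_and_integral_eq_of_nonneg {g g' : ℝ → ℝ} {a l₀ l : ℝ}
    (hg₀ : Tendsto g (𝓝[>] a) (𝓝 l₀)) (hderiv : ∀ x ∈ Ioi a, HasDerivAt g (g' x) x)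
    (hg'_nonneg : ∀ x ∈ Ioi a, 0 ≤ g' x) (hg : Tendsto g atTop (𝓝 l)) :
    IntegrableOn g' (Ioi a) ∧ ∫ x in Ioi a, g' x = l - l₀ := by
  classical
  set G := Function.update g a l₀
  have hG_eq : ∀ x ∈ Ioi a, G =ᶠ[𝓝 x] g := fun x hx => by
    filter_upwards [Ioi_mem_nhds hx] with y hy
    exact Function.update_of_ne hy.ne' _ _
  have hcont : ContinuousWithinAt G (Ici a) a := by
    rwa [← continuousWithinAt_Ioi_iff_Ici, continuousWithinAt_update_same,
      sdiff_singleton_eq_self (self_notMem_Ioi (a := a))]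
  have hGderiv : ∀ x ∈ Ioi a, HasDerivAt G (g' x) x := fun x hx =>
    (hderiv x hx).congr_of_eventuallyEq (hG_eq x hx)
  have hGtop : Tendsto G atTop (𝓝 l) :=
    hg.congr' (by filter_upwards [eventually_gt_atTop a] with x hx
                  exact (Function.update_of_ne hx.ne' _ _).symm)
  refine ⟨integrableOn_Ioi_deriv_of_nonneg hcont hGderiv hg'_nonneg hGtop, ?_⟩
  rw [integral_Ioi_of_hasDerivAt_of_nonneg hcont hGderiv hg'_nonneg hGtop]
  simp [G]

lemma le_add_mul_sub_of_antitoneOn {g g' : ℝ → ℝ} {S : Set ℝ} (hS : S.OrdConnected)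
    (hderiv : ∀ x ∈ S, HasDerivAt g (g' x) x) (hanti : AntitoneOn g' S) {m s : ℝ}
    (hm : m ∈ S) (hs : s ∈ S) : g s ≤ g m + g' m * (s - m) := by
  rcases lt_trichotomy s m with hsm | rfl | hms
  · obtain ⟨ξ, hξ, hslope⟩ := exists_hasDerivAt_eq_slope g g' hsm
      (fun x hx => (hderiv x (hS.out hs hm hx)).continuousAt.continuousWithinAt)
      (fun x hx => hderiv x (hS.out hs hm (Ioo_subset_Icc_self hx)))
    have := hanti (hS.out hs hm (Ioo_subset_Icc_self hξ)) hm hξ.2.le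
    rw [eq_div_iff (sub_ne_zero.2 hsm.ne')] at hslope
    nlinarith
  · simp
  · obtain ⟨ξ, hξ, hslope⟩ := exists_hasDerivAt_eq_slope g g' hms
      (fun x hx => (hderiv x (hS.out hm hs hx)).continuousAt.continuousWithinAt)
      (fun x hx => hderiv x (hS.out hm hs (Ioo_subset_Icc_self hx)))
    have := hanti hm (hS.out hm hs (Ioo_subset_Icc_self hξ)) hξ.1.le
    rw [eq_div_iff (sub_ne_zero.2 hms.ne')] at hslope
    nlinarith

lemma setIntegral_mul_le_of_le_tangent {μ : Measure ℝ} {S : Set ℝ} (hS : MeasurableSet S)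
    {f g : ℝ → ℝ} {m D : ℝ} (hf_nonneg : ∀ s ∈ S, 0 ≤ f s) (hf : IntegrableOn f S μ)
    (hf_one : ∫ s in S, f s ∂μ = 1) (hsf : IntegrableOn (fun s => s * f s) S μ)
    (hmean : ∫ s in S, s * f s ∂μ = m) (hgf : IntegrableOn (fun s => g s * f s) S μ)
    (htangent : ∀ s ∈ S, g s ≤ g m + D * (s - m)) :
    ∫ s in S, g s * f s ∂μ ≤ g m := by
  have hline : IntegrableOn (fun s => (g m - D * m) * f s + D * (s * f s)) S μ :=
    (hf.const_mul _).add (hsf.const_mul _)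
  calc ∫ s in S, g s * f s ∂μ
      ≤ ∫ s in S, ((g m - D * m) * f s + D * (s * f s)) ∂μ :=
        setIntegral_mono_on hgf hline hS fun s hs => by
          linarith [mul_le_mul_of_nonneg_right (htangent s hs) (hf_nonneg s hs)]
    _ = g m := by
        rw [integral_add (hf.const_mul _) (hsf.const_mul _), integral_const_mul,
          integral_const_mul, hf_one, hmean]
        ring

lemma gaussPdf_eq_gaussianPDFReal : gaussPdf = gaussianPDFReal 0 1 := by
  ext z
  simp [gaussPdf, gaussianPDFReal_def, div_eq_inv_mul]

lemma gaussPdf_nonneg (z : ℝ) : 0 ≤ gaussPdf z :=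
  gaussPdf_eq_gaussianPDFReal ▸ gaussianPDFReal_nonneg 0 1 z

lemma integrable_gaussPdf : Integrable gaussPdf :=
  gaussPdf_eq_gaussianPDFReal ▸ integrable_gaussianPDFReal 0 1

lemma integral_gaussPdf : ∫ z, gaussPdf z = 1 :=
  gaussPdf_eq_gaussianPDFReal ▸ integral_gaussianPDFReal_eq_one 0 one_ne_zero

lemma continuous_gaussPdf : Continuous gaussPdf := by
  unfold gaussPdf; fun_prop

lemma gaussPdf_eq_of_sq_eq {p q : ℝ} (h : p ^ 2 = q ^ 2) : gaussPdf p = gaussPdf q := by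
  rw [gaussPdf, gaussPdf, h]

lemma hasDerivAt_gaussCdf (y : ℝ) : HasDerivAt gaussCdf (gaussPdf y) y := by
  have hsplit : ∀ u, gaussCdf u = (∫ z in Iic 0, gaussPdf z) + ∫ z in (0 : ℝ)..u, gaussPdf z := by
    intro u
    rw [gaussCdf, ← integral_Iic_eq_integral_Iio, ← intervalIntegral.integral_Iic_sub_Iic
      integrable_gaussPdf.integrableOn integrable_gaussPdf.integrableOn]
    ring
  have hFTC : HasDerivAt (fun u => ∫ z in (0 : ℝ)..u, gaussPdf z) (gaussPdf y) y :=
    intervalIntegral.integral_hasDerivAt_right integrable_gaussPdf.intervalIntegrable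
      continuous_gaussPdf.stronglyMeasurable.stronglyMeasurableAtFilter
      continuous_gaussPdf.continuousAt
  rw [funext hsplit]
  exact hFTC.const_add _

@[fun_prop]
lemma continuous_gaussCdf : Continuous gaussCdf :=
  continuous_iff_continuousAt.2 fun y => (hasDerivAt_gaussCdf y).continuousAt

lemma gaussCdf_nonneg (y : ℝ) : 0 ≤ gaussCdf y :=
  setIntegral_nonneg measurableSet_Iio fun z _ => gaussPdf_nonneg z

lemma gaussCdf_le_one (y : ℝ) : gaussCdf y ≤ 1 :=
  integral_gaussPdf ▸ setIntegral_le_integral integrable_gaussPdf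
    (Eventually.of_forall gaussPdf_nonneg)

lemma tendsto_gaussCdf_atTop : Tendsto gaussCdf atTop (𝓝 1) :=
  integral_gaussPdf ▸
    (aecover_Iio tendsto_id).integral_tendsto_of_countably_generated integrable_gaussPdf

lemma tendsto_gaussCdf_atBot : Tendsto gaussCdf atBot (𝓝 0) := by
  have hcompl : ∀ y, gaussCdf y = 1 - ∫ z in Ici y, gaussPdf z := fun y => by
    rw [← integral_gaussPdf, ← intervalIntegral.integral_Iio_add_Ici
      integrable_gaussPdf.integrableOn integrable_gaussPdf.integrableOn, gaussCdf]
    ring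
  have htail := (aecover_Ici tendsto_id).integral_tendsto_of_countably_generated
    integrable_gaussPdf (l := atBot)
  rw [funext hcompl, ← sub_self (1 : ℝ), ← integral_gaussPdf]
  exact tendsto_const_nhds.sub htail

noncomputable def igArg (β c t : ℝ) : ℝ := β * √t - c / √t

noncomputable def igDensity (β c t : ℝ) : ℝ := c / (t * √t) * gaussPdf (igArg β c t)

noncomputable def igCdf (β c t : ℝ) : ℝ :=
  gaussCdf (igArg β c t) + exp (2 * β * c) * gaussCdf (igArg (-β) c t)

noncomputable def igPartialMean (β c t : ℝ) : ℝ :=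
  c / β * (gaussCdf (igArg β c t) - exp (2 * β * c) * gaussCdf (igArg (-β) c t))

section InverseGaussian

variable {β c t : ℝ}

lemma hasDerivAt_igArg (β c : ℝ) (ht : 0 < t) :
    HasDerivAt (igArg β c) ((β * t + c) / (2 * t * √t)) t := by
  have hsqrt : HasDerivAt (√·) (1 / (2 * √t)) t := Real.hasDerivAt_sqrt ht.ne'
  have hpos : 0 < √t := Real.sqrt_pos.2 ht
  refine ((hsqrt.const_mul β).sub ((hasDerivAt_const t c).div hsqrt hpos.ne')).congr_deriv ?_
  field_simp
  rw [Real.sq_sqrt ht.le]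
  ring

lemma exp_mul_gaussPdf_igArg_neg (β c : ℝ) (ht : 0 < t) :
    exp (2 * β * c) * gaussPdf (igArg (-β) c t) = gaussPdf (igArg β c t) := by
  have hsq : igArg (-β) c t ^ 2 = igArg β c t ^ 2 + 4 * β * c := by
    have : √t * (c / √t) = c := mul_div_cancel₀ c (Real.sqrt_pos.2 ht).ne'
    unfold igArg
    linear_combination (4 * β) * this
  rw [gaussPdf, gaussPdf, hsq, mul_left_comm, ← exp_add]
  ring_nf

lemma hasDerivAt_gaussCdf_igArg (β c : ℝ) (ht : 0 < t) :
    HasDerivAt (fun t => gaussCdf (igArg β c t))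
      (gaussPdf (igArg β c t) * ((β * t + c) / (2 * t * √t))) t :=
  (hasDerivAt_gaussCdf _).comp t (hasDerivAt_igArg β c ht)

lemma hasDerivAt_exp_mul_gaussCdf_igArg_neg (β c : ℝ) (ht : 0 < t) :
    HasDerivAt (fun t => exp (2 * β * c) * gaussCdf (igArg (-β) c t))
      (gaussPdf (igArg β c t) * ((-β * t + c) / (2 * t * √t))) t := by
  refine ((hasDerivAt_gaussCdf_igArg (-β) c ht).const_mul (exp (2 * β * c))).congr_deriv ?_
  rw [← mul_assoc, exp_mul_gaussPdf_igArg_neg β c ht]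

lemma hasDerivAt_igCdf (β c : ℝ) (ht : 0 < t) :
    HasDerivAt (igCdf β c) (igDensity β c t) t := by
  refine ((hasDerivAt_gaussCdf_igArg β c ht).add
    (hasDerivAt_exp_mul_gaussCdf_igArg_neg β c ht)).congr_deriv ?_
  have : 0 < √t := Real.sqrt_pos.2 ht
  simp only [igDensity]
  field_simp
  ring

lemma hasDerivAt_igPartialMean (hβ : β ≠ 0) (c : ℝ) (ht : 0 < t) :
    HasDerivAt (igPartialMean β c) (t * igDensity β c t) t := by
  refine (((hasDerivAt_gaussCdf_igArg β c ht).sub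
    (hasDerivAt_exp_mul_gaussCdf_igArg_neg β c ht)).const_mul (c / β)).congr_deriv ?_
  have : 0 < √t := Real.sqrt_pos.2 ht
  simp only [igDensity]
  field_simp
  ring

lemma igDensity_nonneg (β : ℝ) (hc : 0 ≤ c) (ht : 0 < t) : 0 ≤ igDensity β c t :=
  mul_nonneg (by positivity) (gaussPdf_nonneg _)

lemma tendsto_igArg_atTop (hβ : 0 < β) (c : ℝ) : Tendsto (igArg β c) atTop atTop :=
  (tendsto_sqrt_atTop.const_mul_atTop hβ).atTop_add
    ((tendsto_const_nhds (x := c)).div_atTop tendsto_sqrt_atTop |>.neg) |>.congr fun t => by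
      simp [igArg, sub_eq_add_neg]

lemma tendsto_igArg_nhdsGT_zero (β : ℝ) (hc : 0 < c) :
    Tendsto (igArg β c) (𝓝[>] 0) atBot := by
  have hsqrt₀ : Tendsto (√·) (𝓝[>] 0) (𝓝 0) :=
    (Real.continuous_sqrt.tendsto' 0 0 Real.sqrt_zero).mono_left nhdsWithin_le_nhds
  have hsqrt : Tendsto (√·) (𝓝[>] 0) (𝓝[>] 0) :=
    tendsto_nhdsWithin_of_tendsto_nhds_of_eventually_within _ hsqrt₀
      (eventually_nhdsWithin_of_forall fun t ht => Real.sqrt_pos.2 ht)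
  have hinv : Tendsto (fun t => c / √t) (𝓝[>] 0) atTop := by
    simpa [div_eq_mul_inv] using (tendsto_inv_nhdsGT_zero.comp hsqrt).const_mul_atTop hc
  have hlin : Tendsto (fun t => β * √t) (𝓝[>] 0) (𝓝 0) := by
    simpa using hsqrt₀.const_mul β
  exact (hlin.add_atBot (tendsto_neg_atTop_atBot.comp hinv)).congr fun t => by
    simp [igArg, sub_eq_add_neg]

lemma tendsto_gaussCdf_igArg_nhdsGT_zero (β : ℝ) (hc : 0 < c) :
    Tendsto (fun t => gaussCdf (igArg β c t)) (𝓝[>] 0) (𝓝 0) :=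
  tendsto_gaussCdf_atBot.comp (tendsto_igArg_nhdsGT_zero β hc)

lemma tendsto_gaussCdf_igArg_atTop (hβ : 0 < β) (c : ℝ) :
    Tendsto (fun t => gaussCdf (igArg β c t)) atTop (𝓝 1) :=
  tendsto_gaussCdf_atTop.comp (tendsto_igArg_atTop hβ c)

lemma tendsto_gaussCdf_igArg_neg_atTop (hβ : 0 < β) (c : ℝ) :
    Tendsto (fun t => gaussCdf (igArg (-β) c t)) atTop (𝓝 0) := by
  refine tendsto_gaussCdf_atBot.comp ((tendsto_neg_atTop_atBot.comp
    (tendsto_igArg_atTop hβ (-c))).congr fun t => ?_)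
  simp only [Function.comp, igArg]
  ring

lemma tendsto_igCdf_nhdsGT_zero (β : ℝ) (hc : 0 < c) : Tendsto (igCdf β c) (𝓝[>] 0) (𝓝 0) := by
  have h := (tendsto_gaussCdf_igArg_nhdsGT_zero β hc).add
    ((tendsto_gaussCdf_igArg_nhdsGT_zero (-β) hc).const_mul (exp (2 * β * c)))
  rwa [mul_zero, add_zero] at h

lemma tendsto_igCdf_atTop (hβ : 0 < β) (c : ℝ) : Tendsto (igCdf β c) atTop (𝓝 1) := by
  have h := (tendsto_gaussCdf_igArg_atTop hβ c).add
    ((tendsto_gaussCdf_igArg_neg_atTop hβ c).const_mul (exp (2 * β * c)))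
  rwa [mul_zero, add_zero] at h

lemma tendsto_igPartialMean_nhdsGT_zero (β : ℝ) (hc : 0 < c) :
    Tendsto (igPartialMean β c) (𝓝[>] 0) (𝓝 0) := by
  have h := ((tendsto_gaussCdf_igArg_nhdsGT_zero β hc).sub
    ((tendsto_gaussCdf_igArg_nhdsGT_zero (-β) hc).const_mul (exp (2 * β * c)))).const_mul (c / β)
  rwa [mul_zero, sub_zero, mul_zero] at h

lemma tendsto_igPartialMean_atTop (hβ : 0 < β) (c : ℝ) :
    Tendsto (igPartialMean β c) atTop (𝓝 (c / β)) := by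
  have h := ((tendsto_gaussCdf_igArg_atTop hβ c).sub
    ((tendsto_gaussCdf_igArg_neg_atTop hβ c).const_mul (exp (2 * β * c)))).const_mul (c / β)
  rwa [mul_zero, sub_zero, mul_one] at h

lemma integrableOn_igDensity_and_integral_eq_one (hβ : 0 < β) (hc : 0 < c) :
    IntegrableOn (igDensity β c) (Ioi 0) ∧ ∫ t in Ioi 0, igDensity β c t = 1 := by
  simpa using integrableOn_Ioi_deriv_and_integral_eq_of_nonneg
    (tendsto_igCdf_nhdsGT_zero β hc) (fun t ht => hasDerivAt_igCdf β c ht)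
    (fun t ht => igDensity_nonneg β hc.le ht) (tendsto_igCdf_atTop hβ c)

lemma integrableOn_mul_igDensity_and_integral_eq (hβ : 0 < β) (hc : 0 < c) :
    IntegrableOn (fun t => t * igDensity β c t) (Ioi 0) ∧
      ∫ t in Ioi 0, t * igDensity β c t = c / β := by
  simpa using integrableOn_Ioi_deriv_and_integral_eq_of_nonneg
    (tendsto_igPartialMean_nhdsGT_zero β hc) (fun t ht => hasDerivAt_igPartialMean hβ.ne' c ht)
    (fun t ht => mul_nonneg (le_of_lt ht) (igDensity_nonneg β hc.le ht))
    (tendsto_igPartialMean_atTop hβ c)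

end InverseGaussian

lemma hasDerivAt_two_mul_gaussCdf_mul_sqrt_sub_one (β : ℝ) {s : ℝ} (hs : 0 < s) :
    HasDerivAt (fun s => 2 * gaussCdf (β * √s) - 1) (β * gaussPdf (β * √s) / √s) s := by
  have hsqrt : HasDerivAt (fun s => β * √s) (β * (1 / (2 * √s))) s :=
    (Real.hasDerivAt_sqrt hs.ne').const_mul β
  refine (((hasDerivAt_gaussCdf _).comp s hsqrt).const_mul 2 |>.sub_const 1).congr_deriv ?_
  field_simp

lemma antitoneOn_mul_gaussPdf_mul_sqrt_div_sqrt {β : ℝ} (hβ : 0 ≤ β) :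
    AntitoneOn (fun s => β * gaussPdf (β * √s) / √s) (Ioi 0) := by
  intro r₁ hr₁ r₂ _ hr
  have hpdf : gaussPdf (β * √r₂) ≤ gaussPdf (β * √r₁) := by
    unfold gaussPdf
    gcongr
  exact div_le_div₀ (mul_nonneg hβ (gaussPdf_nonneg _)) (mul_le_mul_of_nonneg_left hpdf hβ)
    (Real.sqrt_pos.2 hr₁) (Real.sqrt_le_sqrt hr)

lemma abs_two_mul_gaussCdf_sub_one_le_one (y : ℝ) : |2 * gaussCdf y - 1| ≤ 1 :=
  abs_le.2 ⟨by linarith [gaussCdf_nonneg y], by linarith [gaussCdf_le_one y]⟩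

lemma invGaussPdf_eq_igDensity {a x b s : ℝ} (h : (a - x) * b < 0) (hs : 0 < s) :
    invGaussPdf a x b s = igDensity |b| |a - x| s := by
  have hrpow : s ^ ((3 : ℝ) / 2) = s * √s := by
    rw [show (3 : ℝ) / 2 = 1 + 1 / 2 by norm_num, Real.rpow_add hs, Real.rpow_one,
      Real.sqrt_eq_rpow]
  have hsign : (a - x) * b = -(|b| * |a - x|) := by
    rw [mul_comm |b|, ← abs_mul, abs_of_neg h, neg_neg]
  have hsq : ((a + b * s - x) / √s) ^ 2 = igArg |b| |a - x| s ^ 2 := by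
    have hs' : √s ≠ 0 := (Real.sqrt_pos.2 hs).ne'
    rw [igArg, div_pow, sub_div' hs', div_pow, mul_assoc, Real.mul_self_sqrt hs.le]
    congr 1
    linear_combination (2 * s) * hsign + (sq_abs (a - x)).symm + s ^ 2 * (sq_abs b).symm
  rw [invGaussPdf, igDensity, hrpow, gaussPdf_eq_of_sq_eq hsq]

theorem stmt7 (a x b : ℝ) (hb : b ≠ 0) (h : (a - x) * b < 0) :
    ∫ s in Set.Ioi (0 : ℝ), (2 * gaussCdf (|b| * Real.sqrt s) - 1) * invGaussPdf a x b s
      ≤ 2 * gaussCdf (Real.sqrt (|b * (a - x)|)) - 1 := by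
  have hβ : 0 < |b| := abs_pos.2 hb
  have hc : 0 < |a - x| := abs_pos.2 fun hax => by simp [hax] at h
  obtain ⟨hf, hf_one⟩ := integrableOn_igDensity_and_integral_eq_one hβ hc
  obtain ⟨hsf, hmean⟩ := integrableOn_mul_igDensity_and_integral_eq hβ hc
  have hgf : IntegrableOn (fun s => (2 * gaussCdf (|b| * √s) - 1) * igDensity |b| |a - x| s)
      (Ioi 0) :=
    hf.bdd_mul (Continuous.aestronglyMeasurable (by fun_prop))
      (ae_of_all _ fun s => (Real.norm_eq_abs _).trans_le (abs_two_mul_gaussCdf_sub_one_le_one _))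
  have hmean_sqrt : |b| * √(|a - x| / |b|) = √|b * (a - x)| := by
    have : |b| * |a - x| = |b| ^ 2 * (|a - x| / |b|) := by field_simp
    rw [abs_mul, this, Real.sqrt_mul (sq_nonneg _), Real.sqrt_sq hβ.le]
  rw [setIntegral_congr_fun measurableSet_Ioi fun s hs => by
    rw [invGaussPdf_eq_igDensity h hs], ← hmean_sqrt]
  exact setIntegral_mul_le_of_le_tangent (g := fun s => 2 * gaussCdf (|b| * √s) - 1)
    measurableSet_Ioi (fun s hs => igDensity_nonneg _ hc.le hs) hf hf_one hsf hmean hgf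
    fun s hs => le_add_mul_sub_of_antitoneOn ordConnected_Ioi
      (fun r hr => hasDerivAt_two_mul_gaussCdf_mul_sqrt_sub_one _ hr)
      (antitoneOn_mul_gaussPdf_mul_sqrt_div_sqrt hβ.le) (div_pos hc hβ) hs
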